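/- arXiv:2304.05208 — 3 statements merged into one kernel-verified Lean document; each statement's English description precedes it below -/
import Mathlib

section
/- Let ε ∈ {1,−1} and suppose there exists a nonzero φ ∈ S with Q_θ φ = ε·φ. Then there exist a nonzero φ₀ ∈ S and λ ∈ {|P|, −|P|} such that Q_θ φ₀ = ε·φ₀ and A φ₀ = λ·φ₀. -/
theorem momentum_eigenvector_exists
    {S : Type*} [NormedAddCommGroup S] [InnerProductSpace ℂ S]
    [FiniteDimensional ℂ S] [Nontrivial S]
    (n : ℕ) (hn : 2 ≤ n)
    (γ : ℕ → S →ₗ[ℂ] S)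
    (h0 : γ 0 ∘ₗ γ 0 = LinearMap.id)
    (hsq : ∀ j, 1 ≤ j → j ≤ n → γ j ∘ₗ γ j = -LinearMap.id)
    (hanti : ∀ a b, a ≤ n → b ≤ n → a ≠ b → γ a ∘ₗ γ b = -(γ b ∘ₗ γ a))
    (hsa : ∀ φ ψ : S, (inner ℂ (γ 0 φ) ψ : ℂ) = inner ℂ φ (γ 0 ψ))
    (hskew : ∀ j, 1 ≤ j → j ≤ n → ∀ φ ψ : S,
      (inner ℂ (γ j φ) ψ : ℂ) = -inner ℂ φ (γ j ψ))
    (θ : ℝ) (hθ : θ ∈ Set.Icc (-(Real.pi / 2)) (Real.pi / 2))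
    (Q : S →ₗ[ℂ] S)
    (hQ : Q = (Real.cos θ : ℂ) • (γ 0 ∘ₗ γ n) +
      (Complex.I * (Real.sin θ : ℂ)) • γ n)
    (P : ℕ → ℝ)
    (A : S →ₗ[ℂ] S)
    (hA : A = Complex.I • ∑ α ∈ Finset.Ico 1 n, (P α : ℂ) • (γ α ∘ₗ γ n ∘ₗ γ 0))
    (ε : ℝ) (hε : ε = 1 ∨ ε = -1)
    (hexists : ∃ φ : S, φ ≠ 0 ∧ Q φ = (ε : ℂ) • φ) :
    ∃ φ₀ : S, φ₀ ≠ 0 ∧ ∃ lam : ℝ,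
      (lam = Real.sqrt (∑ α ∈ Finset.Ico 1 n, (P α) ^ 2) ∨
        lam = -Real.sqrt (∑ α ∈ Finset.Ico 1 n, (P α) ^ 2)) ∧
      Q φ₀ = (ε : ℂ) • φ₀ ∧ A φ₀ = (lam : ℂ) • φ₀ := by

  classical
  obtain ⟨φ, hφ, hQφ⟩ := hexists
  have h0n : (0:ℕ) ≠ n := by omega
  have h1n : (1:ℕ) ≤ n := by omega
  -- pointwise forms of the Clifford relations
  have sq0 : ∀ x : S, γ 0 (γ 0 x) = x := fun x => by
    simpa using DFunLike.congr_fun h0 x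
  have sqj : ∀ j, 1 ≤ j → j ≤ n → ∀ x : S, γ j (γ j x) = -x := fun j h1 h2 x => by
    simpa using DFunLike.congr_fun (hsq j h1 h2) x
  have ac : ∀ a b, a ≤ n → b ≤ n → a ≠ b → ∀ x : S, γ a (γ b x) = -γ b (γ a x) :=
    fun a b ha hb hne x => by
      simpa using DFunLike.congr_fun (hanti a b ha hb hne) x
  have sqn : ∀ x : S, γ n (γ n x) = -x := sqj n h1n le_rfl
  have c0n : ∀ x : S, γ 0 (γ n x) = -γ n (γ 0 x) := ac 0 n (by omega) le_rfl h0n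
  set b : ℕ → S →ₗ[ℂ] S := fun a => γ a ∘ₗ γ n ∘ₗ γ 0 with hbdef
  have hbapp : ∀ a (x : S), b a x = γ a (γ n (γ 0 x)) := fun a x => rfl
  have hAx : ∀ x : S, A x = Complex.I • ∑ α ∈ Finset.Ico 1 n, (P α : ℂ) • b α x := by
    intro x
    rw [hA]
    simp [LinearMap.sum_apply, hbdef]
  -- b α commutes with Q
  have key1 : ∀ α ∈ Finset.Ico 1 n, ∀ x : S, b α (Q x) = Q (b α x) := by
    intro α hα x
    obtain ⟨hα1, hαn⟩ := Finset.mem_Ico.mp hα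
    have hαle : α ≤ n := hαn.le
    have c0a : ∀ x : S, γ 0 (γ α x) = -γ α (γ 0 x) := ac 0 α (by omega) hαle (by omega)
    have cna : ∀ x : S, γ n (γ α x) = -γ α (γ n x) := ac n α le_rfl hαle (by omega)
    have sqa : ∀ x : S, γ α (γ α x) = -x := sqj α hα1 hαle
    simp only [hbapp, hQ, LinearMap.add_apply, LinearMap.smul_apply, LinearMap.comp_apply,
      map_add, map_smul, map_neg, c0n, c0a, cna, sq0, sqn, sqa, smul_neg, neg_neg]
  -- product of two b's
  have key2 : ∀ α ∈ Finset.Ico 1 n, ∀ β ∈ Finset.Ico 1 n, ∀ x : S,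
      b α (b β x) = γ α (γ β x) := by
    intro α hα β hβ x
    obtain ⟨hβ1, hβn⟩ := Finset.mem_Ico.mp hβ
    have hβle : β ≤ n := hβn.le
    have c0b : ∀ x : S, γ 0 (γ β x) = -γ β (γ 0 x) := ac 0 β (by omega) hβle (by omega)
    have cnb : ∀ x : S, γ n (γ β x) = -γ β (γ n x) := ac n β le_rfl hβle (by omega)
    simp only [hbapp, c0b, c0n, cnb, sq0, sqn, map_neg, neg_neg]
  -- A commutes with Q
  have hcomm : ∀ x : S, A (Q x) = Q (A x) := by
    intro x
    rw [hAx, hAx, map_smul]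
    congr 1
    rw [map_sum]
    exact Finset.sum_congr rfl fun α hα => by rw [map_smul, key1 α hα]
  -- A squared
  set Psum : ℝ := ∑ α ∈ Finset.Ico 1 n, (P α) ^ 2 with hPsum
  have hA2 : ∀ x : S, A (A x) = (Psum : ℂ) • x := by
    intro x
    have step : ∀ α ∈ Finset.Ico 1 n, b α (A x)
        = Complex.I • ∑ β ∈ Finset.Ico 1 n, (P β : ℂ) • γ α (γ β x) := by
      intro α hα
      rw [hAx x, map_smul, map_sum]
      congr 1
      exact Finset.sum_congr rfl fun β hβ => by rw [map_smul, key2 α hα β hβ]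
    rw [hAx (A x)]
    rw [Finset.sum_congr rfl fun α hα => by rw [step α hα]]
    have collect : ∑ α ∈ Finset.Ico 1 n,
        (P α : ℂ) • (Complex.I • ∑ β ∈ Finset.Ico 1 n, (P β : ℂ) • γ α (γ β x))
        = Complex.I • ∑ α ∈ Finset.Ico 1 n, ∑ β ∈ Finset.Ico 1 n,
            ((P α : ℂ) * (P β : ℂ)) • γ α (γ β x) := by
      rw [Finset.smul_sum]
      refine Finset.sum_congr rfl fun α hα => ?_
      rw [smul_comm, Finset.smul_sum]
      congr 1
      refine Finset.sum_congr rfl fun β hβ => ?_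
      rw [smul_smul]
    rw [collect, smul_smul, Complex.I_mul_I]
    -- double sum cancellation
    set F : ℕ → ℕ → S := fun a c => ((P a : ℂ) * (P c : ℂ)) • γ a (γ c x) with hF
    have hanti' : ∀ a ∈ Finset.Ico 1 n, ∀ c ∈ Finset.Ico 1 n, a ≠ c → F a c = -F c a := by
      intro a ha c hc hne
      obtain ⟨ha1, han⟩ := Finset.mem_Ico.mp ha
      obtain ⟨hc1, hcn⟩ := Finset.mem_Ico.mp hc
      simp only [hF]
      rw [ac a c han.le hcn.le hne, smul_neg, mul_comm]
    have hds : ∑ a ∈ Finset.Ico 1 n, ∑ c ∈ Finset.Ico 1 n, F a c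
        = ∑ a ∈ Finset.Ico 1 n, F a a := by
      have h2 : (∑ a ∈ Finset.Ico 1 n, ∑ c ∈ Finset.Ico 1 n, F a c)
            + (∑ a ∈ Finset.Ico 1 n, ∑ c ∈ Finset.Ico 1 n, F a c)
          = (∑ a ∈ Finset.Ico 1 n, F a a) + (∑ a ∈ Finset.Ico 1 n, F a a) := by
        nth_rewrite 2 [Finset.sum_comm]
        rw [← Finset.sum_add_distrib]
        rw [← Finset.sum_add_distrib]
        refine Finset.sum_congr rfl fun a ha => ?_
        rw [← Finset.sum_add_distrib]
        refine Finset.sum_eq_single_of_mem a ha fun c hc hne => ?_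
        rw [hanti' a ha c hc (Ne.symm hne), neg_add_cancel]
      have h2' : (2:ℂ) • (∑ a ∈ Finset.Ico 1 n, ∑ c ∈ Finset.Ico 1 n, F a c)
          = (2:ℂ) • (∑ a ∈ Finset.Ico 1 n, F a a) := by
        rw [two_smul, two_smul]; exact h2
      exact smul_right_injective S (two_ne_zero) h2'
    rw [hds]
    have diag : ∀ a ∈ Finset.Ico 1 n, F a a = -((((P a) ^ 2 : ℝ) : ℂ) • x) := by
      intro a ha
      obtain ⟨ha1, han⟩ := Finset.mem_Ico.mp ha
      simp only [hF]
      rw [sqj a ha1 han.le x, smul_neg]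
      congr 2
      push_cast
      ring
    rw [Finset.sum_congr rfl diag]
    rw [Finset.sum_neg_distrib, neg_smul, one_smul, neg_neg, ← Finset.sum_smul]
    congr 1
    rw [hPsum]
    push_cast
    rfl
  -- assemble
  have hPsum_nonneg : 0 ≤ Psum := Finset.sum_nonneg fun _ _ => sq_nonneg _
  set r : ℝ := Real.sqrt Psum with hrdef
  have hr2 : (r : ℂ) * (r : ℂ) = (Psum : ℂ) := by
    have : r * r = Psum := Real.mul_self_sqrt hPsum_nonneg
    push_cast [← this]
    ring
  set ψ : S := A φ + (r : ℂ) • φ with hψdef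
  by_cases hψ : ψ = 0
  · refine ⟨φ, hφ, -r, Or.inr rfl, hQφ, ?_⟩
    have : A φ = -((r : ℂ) • φ) := by
      rw [eq_neg_iff_add_eq_zero]
      exact hψ
    rw [this]
    push_cast
    rw [neg_smul]
  · refine ⟨ψ, hψ, r, Or.inl rfl, ?_, ?_⟩
    · rw [hψdef, map_add, map_smul, hQφ, ← hcomm, hQφ, map_smul]
      rw [smul_add, smul_comm]
    · rw [hψdef, map_add, map_smul, hA2, smul_add, smul_smul, hr2]
      rw [add_comm]
end

section
/- Let ε ∈ {1,−1} and suppose that for each σ ∈ {1,−1} there exists a nonzero φ ∈ S with Q_{σθ} φ = ε·φ. Then there exist σ ∈ {1,−1} and a nonzero φ₀ ∈ S with Q_{σθ} φ₀ = ε·φ₀ such that −ε·sin(σθ)·⟨A φ₀, φ₀⟩ = |sinθ|·|P|·‖φ₀‖². -/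
theorem momentum_sign_choice
    {S : Type*} [NormedAddCommGroup S] [InnerProductSpace ℂ S]
    [FiniteDimensional ℂ S] [Nontrivial S]
    (n : ℕ) (hn : 2 ≤ n)
    (γ : ℕ → S →ₗ[ℂ] S)
    (h0 : γ 0 ∘ₗ γ 0 = LinearMap.id)
    (hsq : ∀ j, 1 ≤ j → j ≤ n → γ j ∘ₗ γ j = -LinearMap.id)
    (hanti : ∀ a b, a ≤ n → b ≤ n → a ≠ b → γ a ∘ₗ γ b = -(γ b ∘ₗ γ a))
    (hsa : ∀ φ ψ : S, (inner ℂ (γ 0 φ) ψ : ℂ) = inner ℂ φ (γ 0 ψ))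
    (hskew : ∀ j, 1 ≤ j → j ≤ n → ∀ φ ψ : S,
      (inner ℂ (γ j φ) ψ : ℂ) = -inner ℂ φ (γ j ψ))
    (θ : ℝ) (hθ : θ ∈ Set.Icc (-(Real.pi / 2)) (Real.pi / 2))
    (Q : ℝ → S →ₗ[ℂ] S)
    (hQ : ∀ t : ℝ, Q t = (Real.cos t : ℂ) • (γ 0 ∘ₗ γ n) +
      (Complex.I * (Real.sin t : ℂ)) • γ n)
    (P : ℕ → ℝ)
    (A : S →ₗ[ℂ] S)
    (hA : A = Complex.I • ∑ α ∈ Finset.Ico 1 n, (P α : ℂ) • (γ α ∘ₗ γ n ∘ₗ γ 0))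
    (ε : ℝ) (hε : ε = 1 ∨ ε = -1)
    (hexists : ∀ σ : ℝ, σ = 1 ∨ σ = -1 →
      ∃ φ : S, φ ≠ 0 ∧ Q (σ * θ) φ = (ε : ℂ) • φ) :
    ∃ σ : ℝ, (σ = 1 ∨ σ = -1) ∧
      ∃ φ₀ : S, φ₀ ≠ 0 ∧ Q (σ * θ) φ₀ = (ε : ℂ) • φ₀ ∧
        -(ε : ℂ) * (Real.sin (σ * θ) : ℂ) * (inner ℂ (A φ₀) φ₀ : ℂ)
          = ((|Real.sin θ| * Real.sqrt (∑ α ∈ Finset.Ico 1 n, (P α) ^ 2) * ‖φ₀‖ ^ 2 : ℝ) : ℂ) := by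
  have hn1 : 1 ≤ n := by omega
  -- pointwise Clifford relations
  have c00 : ∀ φ : S, γ 0 (γ 0 φ) = φ := fun φ => by
    simpa using LinearMap.congr_fun h0 φ
  have cnn : ∀ φ : S, γ n (γ n φ) = -φ := fun φ => by
    simpa using LinearMap.congr_fun (hsq n hn1 le_rfl) φ
  have c0n : ∀ φ : S, γ 0 (γ n φ) = -γ n (γ 0 φ) := fun φ => by
    simpa using LinearMap.congr_fun (hanti 0 n (Nat.zero_le n) le_rfl (by omega)) φ
  have caa : ∀ α ∈ Finset.Ico 1 n, ∀ φ : S, γ α (γ α φ) = -φ := by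
    intro α hα φ
    rw [Finset.mem_Ico] at hα
    simpa using LinearMap.congr_fun (hsq α hα.1 (by omega)) φ
  have cna : ∀ α ∈ Finset.Ico 1 n, ∀ φ : S, γ n (γ α φ) = -γ α (γ n φ) := by
    intro α hα φ
    rw [Finset.mem_Ico] at hα
    simpa using LinearMap.congr_fun (hanti n α le_rfl (by omega) (by omega)) φ
  have c0a : ∀ α ∈ Finset.Ico 1 n, ∀ φ : S, γ 0 (γ α φ) = -γ α (γ 0 φ) := by
    intro α hα φ
    rw [Finset.mem_Ico] at hα
    simpa using LinearMap.congr_fun (hanti 0 α (Nat.zero_le n) (by omega) (by omega)) φ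
  have cab : ∀ α ∈ Finset.Ico 1 n, ∀ β ∈ Finset.Ico 1 n, α ≠ β →
      ∀ φ : S, γ α (γ β φ) = -γ β (γ α φ) := by
    intro α hα β hβ hne φ
    rw [Finset.mem_Ico] at hα hβ
    simpa using LinearMap.congr_fun (hanti α β (by omega) (by omega) hne) φ
  -- pointwise formulas for Q and A
  have hQ' : ∀ (t : ℝ) (φ : S), Q t φ =
      (Real.cos t : ℂ) • γ 0 (γ n φ) + (Complex.I * (Real.sin t : ℂ)) • γ n φ := by
    intro t φ
    rw [hQ t]
    simp [LinearMap.add_apply, LinearMap.smul_apply, LinearMap.comp_apply]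
  have hA' : ∀ φ : S, A φ =
      Complex.I • ∑ α ∈ Finset.Ico 1 n, (P α : ℂ) • γ α (γ n (γ 0 φ)) := by
    intro φ
    rw [hA]
    simp [LinearMap.sum_apply, LinearMap.smul_apply, LinearMap.comp_apply]
  -- micro lemmas
  have L1 : ∀ α ∈ Finset.Ico 1 n, ∀ φ : S,
      γ 0 (γ n (γ α (γ n (γ 0 φ)))) = -γ α φ := by
    intro α hα φ
    simp only [cna α hα, c0a α hα, c0n, map_neg, neg_neg, cnn, c00]
  have L2 : ∀ α ∈ Finset.Ico 1 n, ∀ φ : S,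
      γ n (γ α (γ n (γ 0 φ))) = γ α (γ 0 φ) := by
    intro α hα φ
    simp only [cna α hα, map_neg, neg_neg, cnn]
  have L4 : ∀ α ∈ Finset.Ico 1 n, ∀ φ : S,
      γ α (γ n (γ 0 (γ n φ))) = γ α (γ 0 φ) := by
    intro α hα φ
    simp only [c0n, map_neg, neg_neg, cnn]
  have L5 : ∀ α ∈ Finset.Ico 1 n, ∀ φ : S,
      γ α (γ n (γ 0 (γ 0 φ))) = γ 0 (γ α (γ n (γ 0 φ))) := by
    intro α hα φ
    simp only [c0a α hα, c0n, map_neg, neg_neg, cnn, c00]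
  have L7 : ∀ α ∈ Finset.Ico 1 n, ∀ β ∈ Finset.Ico 1 n, ∀ φ : S,
      γ α (γ n (γ 0 (γ β (γ n (γ 0 φ))))) = γ α (γ β φ) := by
    intro α hα β hβ φ
    simp only [c0a β hβ, cna β hβ, c0n, map_neg, neg_neg, cnn, c00]
  -- Q is an involution
  have hQQ : ∀ (t : ℝ) (φ : S), Q t (Q t φ) = φ := by
    intro t φ
    have hr : Real.cos t * Real.cos t + Real.sin t * Real.sin t = 1 := by
      nlinarith [Real.sin_sq_add_cos_sq t]
    have hcs : (Real.cos t : ℂ) * (Real.cos t : ℂ)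
        + (Real.sin t : ℂ) * (Real.sin t : ℂ) = 1 := by
      exact_mod_cast congrArg Complex.ofReal hr
    rw [hQ' t φ, hQ' t]
    simp only [map_add, map_smul, cnn, c00, c0n, map_neg, smul_neg, smul_smul, neg_neg]
    match_scalars
    · linear_combination Complex.sin_sq_add_cos_sq (t : ℂ)
        - (Complex.sin (t : ℂ) * Complex.sin (t : ℂ)) * Complex.I_mul_I
    · ring
  -- Q t anticommutes with γ 0
  have hQ0 : ∀ (t : ℝ) (φ : S), Q t (γ 0 φ) = -γ 0 (Q t φ) := by
    intro t φ
    rw [hQ' t, hQ' t φ]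
    simp only [map_add, map_smul, c00, c0n, map_neg, smul_neg, neg_neg]
    module
  -- A commutes with Q t
  have hAQ : ∀ (t : ℝ) (φ : S), A (Q t φ) = Q t (A φ) := by
    intro t φ
    have key : ∀ α ∈ Finset.Ico 1 n,
        γ α (γ n (γ 0 (Q t φ))) = Q t (γ α (γ n (γ 0 φ))) := by
      intro α hα
      rw [hQ' t φ, hQ' t (γ α (γ n (γ 0 φ)))]
      simp only [map_add, map_smul]
      rw [c00, cnn, map_neg, L4 α hα, L1 α hα, L2 α hα]
    rw [hA' (Q t φ), hA' φ, map_smul, map_sum]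
    congr 1
    refine Finset.sum_congr rfl fun α hα => ?_
    rw [key α hα, map_smul]
  -- A commutes with γ 0
  have hA0 : ∀ φ : S, A (γ 0 φ) = γ 0 (A φ) := by
    intro φ
    rw [hA' (γ 0 φ), hA' φ, map_smul, map_sum]
    congr 1
    refine Finset.sum_congr rfl fun α hα => ?_
    rw [L5 α hα, map_smul]
  -- A squared
  set S2 : ℝ := ∑ α ∈ Finset.Ico 1 n, (P α) ^ 2 with hS2
  have hS2nonneg : 0 ≤ S2 := Finset.sum_nonneg fun α _ => sq_nonneg _
  have hAA : ∀ φ : S, A (A φ) = (S2 : ℂ) • φ := by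
    intro φ
    have inner_eq : ∀ α ∈ Finset.Ico 1 n,
        γ α (γ n (γ 0 (A φ))) = Complex.I • ∑ β ∈ Finset.Ico 1 n,
          (P β : ℂ) • γ α (γ β φ) := by
      intro α hα
      rw [hA' φ]
      simp only [map_smul, map_sum]
      congr 1
      refine Finset.sum_congr rfl fun β hβ => ?_
      rw [L7 α hα β hβ]
    have expand : A (A φ) = -∑ α ∈ Finset.Ico 1 n, ∑ β ∈ Finset.Ico 1 n,
        ((P α : ℂ) * (P β : ℂ)) • γ α (γ β φ) := by
      rw [hA' (A φ)]
      rw [Finset.sum_congr rfl fun α hα => by rw [inner_eq α hα]]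
      rw [Finset.sum_congr rfl fun α (hα : α ∈ Finset.Ico 1 n) => by
        rw [smul_comm ((P α : ℂ)) Complex.I, Finset.smul_sum (r := (P α : ℂ))]]
      rw [← Finset.smul_sum, smul_smul, Complex.I_mul_I, neg_one_smul]
      congr 1
      refine Finset.sum_congr rfl fun α hα => ?_
      refine Finset.sum_congr rfl fun β hβ => ?_
      rw [smul_smul]
    set T : S := ∑ α ∈ Finset.Ico 1 n, ∑ β ∈ Finset.Ico 1 n,
        ((P α : ℂ) * (P β : ℂ)) • γ α (γ β φ) with hT
    have hswap : T = ∑ α ∈ Finset.Ico 1 n, ∑ β ∈ Finset.Ico 1 n,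
        ((P α : ℂ) * (P β : ℂ)) • γ β (γ α φ) := by
      rw [hT, Finset.sum_comm]
      refine Finset.sum_congr rfl fun α _ => ?_
      refine Finset.sum_congr rfl fun β _ => ?_
      rw [mul_comm]
    have hTT : T + T = (∑ α ∈ Finset.Ico 1 n, ((-2 * (P α) ^ 2 : ℝ) : ℂ)) • φ := by
      calc T + T = ∑ α ∈ Finset.Ico 1 n, ∑ β ∈ Finset.Ico 1 n,
            (((P α : ℂ) * (P β : ℂ)) • γ α (γ β φ)
              + ((P α : ℂ) * (P β : ℂ)) • γ β (γ α φ)) := by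
            nth_rewrite 1 [hT]
            nth_rewrite 1 [hswap]
            rw [← Finset.sum_add_distrib]
            refine Finset.sum_congr rfl fun α _ => ?_
            rw [← Finset.sum_add_distrib]
        _ = ∑ α ∈ Finset.Ico 1 n, ((-2 * (P α) ^ 2 : ℝ) : ℂ) • φ := by
            refine Finset.sum_congr rfl fun α hα => ?_
            rw [Finset.sum_eq_single_of_mem α hα]
            · rw [caa α hα]
              push_cast
              match_scalars
              ring
            · intro β hβ hne
              rw [cab α hα β hβ (Ne.symm hne)]
              simp
        _ = (∑ α ∈ Finset.Ico 1 n, ((-2 * (P α) ^ 2 : ℝ) : ℂ)) • φ :=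
            (Finset.sum_smul).symm
    have hsum : (∑ α ∈ Finset.Ico 1 n, ((-2 * (P α) ^ 2 : ℝ) : ℂ))
        = (2 : ℂ) * (-(S2 : ℂ)) := by
      have hre : (∑ α ∈ Finset.Ico 1 n, (-2 * (P α) ^ 2)) = 2 * (-S2) := by
        rw [← Finset.mul_sum, ← hS2]
        ring
      exact_mod_cast congrArg Complex.ofReal hre
    have hT' : (2 : ℂ) • T = (2 : ℂ) • ((-(S2 : ℂ)) • φ) := by
      rw [two_smul, hTT, hsum, smul_smul]
    have hTval : T = (-(S2 : ℂ)) • φ := smul_right_injective S two_ne_zero hT'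
    rw [expand, hTval]
    match_scalars
    ring
  -- sign s
  set s : ℝ := if 0 < Real.sin θ then 1 else -1 with hs
  have hs1 : s * Real.sin θ = |Real.sin θ| := by
    by_cases h : 0 < Real.sin θ
    · rw [hs]; simp [h, abs_of_pos h]
    · rw [hs]; simp only [h, if_false]
      rw [abs_of_nonpos (le_of_not_gt h)]; ring
  have hε2 : ε * ε = 1 := by rcases hε with h | h <;> rw [h] <;> norm_num
  set lam : ℝ := ε * s * Real.sqrt S2 with hlam
  have hlam2 : lam * lam = S2 := by
    have hss : s * s = 1 := by
      rw [hs]; by_cases h : 0 < Real.sin θ <;> simp [h]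
    have := Real.mul_self_sqrt hS2nonneg
    rw [hlam]
    calc ε * s * Real.sqrt S2 * (ε * s * Real.sqrt S2)
        = (ε * ε) * (s * s) * (Real.sqrt S2 * Real.sqrt S2) := by ring
      _ = S2 := by rw [hε2, hss, this]; ring
  have hreal : ε * Real.sin θ * lam = |Real.sin θ| * Real.sqrt S2 := by
    rw [hlam]
    calc ε * Real.sin θ * (ε * s * Real.sqrt S2)
        = (ε * ε) * (s * Real.sin θ) * Real.sqrt S2 := by ring
      _ = |Real.sin θ| * Real.sqrt S2 := by rw [hε2, hs1]; ring
  have hC : (ε : ℂ) * Complex.sin (θ : ℂ) * (lam : ℂ)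
      = ((|Real.sin θ| : ℝ) : ℂ) * ((Real.sqrt S2 : ℝ) : ℂ) := by
    rw [← Complex.ofReal_sin]
    exact_mod_cast congrArg Complex.ofReal hreal
  -- main case analysis
  by_cases hcase : ∃ φ : S, φ ≠ 0 ∧ Q θ φ = (ε : ℂ) • φ ∧ A φ = (-(lam : ℂ)) • φ
  · obtain ⟨φ, hφ0, hφQ, hφA⟩ := hcase
    refine ⟨1, Or.inl rfl, φ, hφ0, by rwa [one_mul], ?_⟩
    rw [one_mul, hφA, inner_smul_left, inner_self_eq_norm_sq_to_K, map_neg,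
      Complex.conj_ofReal]
    simp only [show ∀ x : ℝ, (RCLike.ofReal x : ℂ) = Complex.ofReal x from fun _ => rfl]
    push_cast
    linear_combination (‖φ‖ : ℂ)^2 * hC
  · -- A is lam • id everywhere
    have hεC : (ε : ℂ) * (ε : ℂ) = 1 := by
      rw [← Complex.ofReal_mul, hε2, Complex.ofReal_one]
    have hAid : ∀ ψ : S, A ψ = (lam : ℂ) • ψ := by
      intro ψ
      by_contra hne
      set v : S := A ψ - (lam : ℂ) • ψ with hv
      have hv0 : v ≠ 0 := by
        intro h
        rw [hv] at h
        exact hne (sub_eq_zero.mp h)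
      have hAv : A v = (-(lam : ℂ)) • v := by
        rw [hv, map_sub, map_smul, hAA ψ]
        have : (S2 : ℂ) = (lam : ℂ) * (lam : ℂ) := by
          rw [← Complex.ofReal_mul, hlam2]
        rw [this]
        match_scalars <;> ring
      by_cases hχ : Q θ v + (ε : ℂ) • v = 0
      · have hQv : Q θ v = -((ε : ℂ) • v) := eq_neg_of_add_eq_zero_left hχ
        refine hcase ⟨γ 0 v, ?_, ?_, ?_⟩
        · intro h
          apply hv0
          have := congrArg (γ 0) h
          rwa [c00, map_zero] at this
        · rw [hQ0 θ v, hQv, map_neg, map_smul, neg_neg]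
        · rw [hA0 v, hAv, map_smul]
      · refine hcase ⟨Q θ v + (ε : ℂ) • v, hχ, ?_, ?_⟩
        · rw [map_add, hQQ θ v, map_smul, smul_add, smul_smul, hεC, one_smul]
          abel
        · rw [map_add, map_smul, hAv, hAQ θ v, hAv, map_smul, smul_add]
          module
    obtain ⟨φ, hφ0, hφQ⟩ := hexists (-1) (Or.inr rfl)
    refine ⟨-1, Or.inr rfl, φ, hφ0, hφQ, ?_⟩
    have hsinneg : Real.sin (-1 * θ) = -Real.sin θ := by
      rw [neg_one_mul, Real.sin_neg]
    rw [hAid φ, inner_smul_left, inner_self_eq_norm_sq_to_K, Complex.conj_ofReal, hsinneg]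
    simp only [show ∀ x : ℝ, (RCLike.ofReal x : ℂ) = Complex.ofReal x from fun _ => rfl]
    push_cast
    linear_combination (‖φ‖ : ℂ)^2 * hC
end

section
/- Assume the dominant energy condition μ ≥ |J|, and let φ ∈ S satisfy ⟨Tφ, φ⟩ = 0. Set N = ‖φ‖² and, for 1 ≤ j ≤ n, Xʲ = ⟨(γ₀∘γⱼ)φ, φ⟩ (each Xʲ is a real number). Then Tφ = 0, μ·N + Σ_{j=1}^{n} Jⱼ·Xʲ = 0, and μ·Xᵏ + N·Jᵏ = 0 for every k ∈ {1,…,n}. -/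
open scoped InnerProductSpace ComplexConjugate

theorem vanishing_energy_consequences
    {S : Type*} [NormedAddCommGroup S] [InnerProductSpace ℂ S]
    [FiniteDimensional ℂ S] [Nontrivial S]
    (n : ℕ) (hn : 2 ≤ n)
    (γ : ℕ → S →ₗ[ℂ] S)
    (h0 : γ 0 ∘ₗ γ 0 = LinearMap.id)
    (hsq : ∀ j, 1 ≤ j → j ≤ n → γ j ∘ₗ γ j = -LinearMap.id)
    (hanti : ∀ a b, a ≤ n → b ≤ n → a ≠ b → γ a ∘ₗ γ b = -(γ b ∘ₗ γ a))
    (hsa : ∀ φ ψ : S, (inner ℂ (γ 0 φ) ψ : ℂ) = inner ℂ φ (γ 0 ψ))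
    (hskew : ∀ j, 1 ≤ j → j ≤ n → ∀ φ ψ : S,
      (inner ℂ (γ j φ) ψ : ℂ) = -inner ℂ φ (γ j ψ))
    (μ : ℝ) (J : ℕ → ℝ)
    (T : S →ₗ[ℂ] S)
    (hT : T = (μ : ℂ) • LinearMap.id -
      ∑ j ∈ Finset.Icc 1 n, (J j : ℂ) • (γ j ∘ₗ γ 0))
    (hdec : Real.sqrt (∑ j ∈ Finset.Icc 1 n, (J j) ^ 2) ≤ μ)
    (φ : S) (hφT : (inner ℂ (T φ) φ : ℂ) = 0) :
    (∀ j, 1 ≤ j → j ≤ n → ((inner ℂ ((γ 0 ∘ₗ γ j) φ) φ : ℂ)).im = 0) ∧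
    T φ = 0 ∧
    (μ * ‖φ‖ ^ 2 +
      ∑ j ∈ Finset.Icc 1 n, J j * ((inner ℂ ((γ 0 ∘ₗ γ j) φ) φ : ℂ)).re = 0) ∧
    (∀ k, 1 ≤ k → k ≤ n →
      μ * ((inner ℂ ((γ 0 ∘ₗ γ k) φ) φ : ℂ)).re + ‖φ‖ ^ 2 * J k = 0) := by
  have hn0 : (0:ℕ) ≤ n := Nat.zero_le n
  -- pointwise versions of the Clifford relations
  have hpt : ∀ a b, a ≤ n → b ≤ n → a ≠ b → ∀ x : S, γ a (γ b x) = -(γ b (γ a x)) := by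
    intro a b ha hb hab x
    have := LinearMap.ext_iff.mp (hanti a b ha hb hab) x
    simpa using this
  have h0pt : ∀ x : S, γ 0 (γ 0 x) = x := by
    intro x; have := LinearMap.ext_iff.mp h0 x; simpa using this
  have hsqpt : ∀ j, 1 ≤ j → j ≤ n → ∀ x : S, γ j (γ j x) = -x := by
    intro j h1 h2 x; have := LinearMap.ext_iff.mp (hsq j h1 h2) x; simpa using this
  -- γ j ∘ γ 0 is self-adjoint
  have sa : ∀ j, 1 ≤ j → j ≤ n → ∀ x y : S,
      (inner ℂ (γ j (γ 0 x)) y : ℂ) = inner ℂ x (γ j (γ 0 y)) := by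
    intro j h1 h2 x y
    rw [hskew j h1 h2, hsa, hpt 0 j hn0 h2 (by omega), inner_neg_right, neg_neg]
  -- γ 0 ∘ γ j is self-adjoint
  have sa0 : ∀ j, 1 ≤ j → j ≤ n → ∀ x y : S,
      (inner ℂ (γ 0 (γ j x)) y : ℂ) = inner ℂ x (γ 0 (γ j y)) := by
    intro j h1 h2 x y
    rw [hsa, hskew j h1 h2, hpt j 0 h2 hn0 (by omega), inner_neg_right, neg_neg]
  -- γ j ∘ γ k (j ≠ k, both ≥ 1) is skew-adjoint
  have skew2 : ∀ j k, 1 ≤ j → j ≤ n → 1 ≤ k → k ≤ n → j ≠ k → ∀ x y : S,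
      (inner ℂ (γ j (γ k x)) y : ℂ) = -inner ℂ x (γ j (γ k y)) := by
    intro j k hj1 hj2 hk1 hk2 hjk x y
    rw [hskew j hj1 hj2, hskew k hk1 hk2, hpt k j hk2 hj2 (Ne.symm hjk),
      inner_neg_right, neg_neg]
  -- real part of ⟨γⱼγₖφ,φ⟩ vanishes for j ≠ k
  have rskew : ∀ j k, 1 ≤ j → j ≤ n → 1 ≤ k → k ≤ n → j ≠ k →
      ((inner ℂ (γ j (γ k φ)) φ : ℂ)).re = 0 := by
    intro j k hj1 hj2 hk1 hk2 hjk
    have h1 : (inner ℂ (γ j (γ k φ)) φ : ℂ) = -inner ℂ φ (γ j (γ k φ)) :=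
      skew2 j k hj1 hj2 hk1 hk2 hjk φ φ
    have h2 : (inner ℂ φ (γ j (γ k φ)) : ℂ) = conj (inner ℂ (γ j (γ k φ)) φ : ℂ) :=
      (inner_conj_symm _ _).symm
    rw [h2] at h1
    have := congrArg Complex.re h1
    simp only [Complex.neg_re, Complex.conj_re] at this
    linarith
  -- imaginary part of ⟨γ₀γⱼφ,φ⟩ vanishes
  have him : ∀ j, 1 ≤ j → j ≤ n → ((inner ℂ ((γ 0 ∘ₗ γ j) φ) φ : ℂ)).im = 0 := by
    intro j h1 h2
    simp only [LinearMap.comp_apply]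
    have hcj : conj (inner ℂ (γ 0 (γ j φ)) φ : ℂ) = inner ℂ (γ 0 (γ j φ)) φ := by
      rw [inner_conj_symm]; exact (sa0 j h1 h2 φ φ).symm
    exact Complex.conj_eq_iff_im.mp hcj
  have hself : (inner ℂ φ φ : ℂ) = ((‖φ‖ ^ 2 : ℝ) : ℂ) := by
    exact_mod_cast inner_self_eq_norm_sq_to_K φ
  -- the operator K
  set K : S →ₗ[ℂ] S := ∑ j ∈ Finset.Icc 1 n, (J j : ℂ) • (γ j ∘ₗ γ 0) with hK
  have hKapp : K φ = ∑ j ∈ Finset.Icc 1 n, (J j : ℂ) • γ j (γ 0 φ) := by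
    simp [hK, LinearMap.sum_apply]
  have hTφ : T φ = (μ : ℂ) • φ - K φ := by rw [hT]; simp [hK]
  -- ⟨Kφ, φ⟩ = μ‖φ‖²
  have hKφφ : (inner ℂ (K φ) φ : ℂ) = (μ : ℂ) * (‖φ‖ : ℂ) ^ 2 := by
    have h := hφT
    rw [hTφ, inner_sub_left, inner_smul_left, inner_self_eq_norm_sq_to_K,
      Complex.conj_ofReal, sub_eq_zero] at h
    exact h.symm
  -- expand ⟨Kφ, φ⟩ as a sum
  have hKsum : (inner ℂ (K φ) φ : ℂ)
      = ∑ j ∈ Finset.Icc 1 n, (J j : ℂ) * inner ℂ (γ j (γ 0 φ)) φ := by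
    rw [hKapp, sum_inner]
    refine Finset.sum_congr rfl fun j hj => ?_
    rw [inner_smul_left, Complex.conj_ofReal]
  -- ⟨γⱼγ₀φ,φ⟩ = -⟨γ₀γⱼφ,φ⟩
  have hflip : ∀ j, 1 ≤ j → j ≤ n →
      (inner ℂ (γ j (γ 0 φ)) φ : ℂ) = -inner ℂ (γ 0 (γ j φ)) φ := by
    intro j h1 h2
    rw [hpt j 0 h2 hn0 (by omega), inner_neg_left]
  -- the inner ℂ products c j k = ⟨γⱼγ₀φ, γₖγ₀φ⟩
  have hc : ∀ j, 1 ≤ j → j ≤ n → ∀ k, 1 ≤ k → k ≤ n →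
      (inner ℂ (γ j (γ 0 φ)) (γ k (γ 0 φ)) : ℂ)
        = if j = k then (‖φ‖ : ℂ) ^ 2 else inner ℂ (γ j (γ k φ)) φ := by
    intro j hj1 hj2 k hk1 hk2
    have step : (inner ℂ (γ j (γ 0 φ)) (γ k (γ 0 φ)) : ℂ)
        = inner ℂ (γ k (γ 0 (γ j (γ 0 φ)))) φ := (sa k hk1 hk2 _ φ).symm
    have h1 : γ 0 (γ j (γ 0 φ)) = -(γ j φ) := by
      rw [hpt 0 j hn0 hj2 (by omega), h0pt]
    rw [step, h1, map_neg, inner_neg_left]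
    by_cases hjk : j = k
    · subst hjk
      rw [hsqpt j hj1 hj2, inner_neg_left, neg_neg, inner_self_eq_norm_sq_to_K]
      simp
    · rw [if_neg hjk, hpt k j hk2 hj2 (Ne.symm hjk), inner_neg_left, neg_neg]
  -- ⟨Kφ, Kφ⟩ = (Σ J j ^ 2) ‖φ‖²
  have hKK : (inner ℂ (K φ) (K φ) : ℂ)
      = ((∑ j ∈ Finset.Icc 1 n, (J j) ^ 2 : ℝ) : ℂ) * (‖φ‖ : ℂ) ^ 2 := by
    rw [hKapp, sum_inner]
    have expand : ∀ j ∈ Finset.Icc 1 n,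
        (inner ℂ ((J j : ℂ) • γ j (γ 0 φ)) (∑ k ∈ Finset.Icc 1 n, (J k : ℂ) • γ k (γ 0 φ)) : ℂ)
          = ∑ k ∈ Finset.Icc 1 n, (J j : ℂ) * (J k : ℂ) *
              inner ℂ (γ j (γ 0 φ)) (γ k (γ 0 φ)) := by
      intro j hj
      rw [inner_sum]
      refine Finset.sum_congr rfl fun k hk => ?_
      rw [inner_smul_left, inner_smul_right, Complex.conj_ofReal]; ring
    rw [Finset.sum_congr rfl expand]
    -- symmetrize
    set F : ℕ → ℕ → ℂ := fun j k => (J j : ℂ) * (J k : ℂ) *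
        inner ℂ (γ j (γ 0 φ)) (γ k (γ 0 φ)) with hF
    have key : ∀ j ∈ Finset.Icc 1 n, ∀ k ∈ Finset.Icc 1 n,
        F j k + F k j = if j = k then 2 * (J j : ℂ) ^ 2 * (‖φ‖ : ℂ) ^ 2 else 0 := by
      intro j hj k hk
      simp only [Finset.mem_Icc] at hj hk
      simp only [hF]
      rw [hc j hj.1 hj.2 k hk.1 hk.2, hc k hk.1 hk.2 j hj.1 hj.2]
      by_cases hjk : j = k
      · subst hjk
        simp only [if_pos rfl, if_true, eq_self_iff_true]
        ring
      · simp only [if_neg hjk, if_neg (Ne.symm hjk)]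
        rw [hpt k j hk.2 hj.2 (Ne.symm hjk), inner_neg_left]
        ring
    have hsymm : ∑ j ∈ Finset.Icc 1 n, ∑ k ∈ Finset.Icc 1 n, F j k
        = ∑ j ∈ Finset.Icc 1 n, ∑ k ∈ Finset.Icc 1 n, F k j := Finset.sum_comm
    have h2S : 2 * ∑ j ∈ Finset.Icc 1 n, ∑ k ∈ Finset.Icc 1 n, F j k
        = ∑ j ∈ Finset.Icc 1 n, ∑ k ∈ Finset.Icc 1 n, (F j k + F k j) := by
      rw [Finset.sum_congr rfl (fun j (_ : j ∈ Finset.Icc 1 n) =>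
        Finset.sum_add_distrib), Finset.sum_add_distrib, ← hsymm, two_mul]
    have h2S' : ∑ j ∈ Finset.Icc 1 n, ∑ k ∈ Finset.Icc 1 n, (F j k + F k j)
        = ∑ j ∈ Finset.Icc 1 n, 2 * (J j : ℂ) ^ 2 * (‖φ‖ : ℂ) ^ 2 := by
      refine Finset.sum_congr rfl fun j hj => ?_
      rw [Finset.sum_congr rfl (fun k hk => key j hj k hk)]
      rw [Finset.sum_ite_eq (Finset.Icc 1 n) j
        (fun _ => 2 * (J j : ℂ) ^ 2 * (‖φ‖ : ℂ) ^ 2)]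
      rw [if_pos hj]
    have h2S'' : ∑ j ∈ Finset.Icc 1 n, 2 * (J j : ℂ) ^ 2 * (‖φ‖ : ℂ) ^ 2
        = 2 * (((∑ j ∈ Finset.Icc 1 n, (J j) ^ 2 : ℝ) : ℂ) * (‖φ‖ : ℂ) ^ 2) := by
      push_cast
      rw [Finset.sum_mul, Finset.mul_sum]
      exact Finset.sum_congr rfl fun j _ => by ring
    have hgoal : ∑ j ∈ Finset.Icc 1 n, ∑ k ∈ Finset.Icc 1 n, F j k
        = ((∑ j ∈ Finset.Icc 1 n, (J j) ^ 2 : ℝ) : ℂ) * (‖φ‖ : ℂ) ^ 2 :=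
      mul_left_cancel₀ (two_ne_zero) (h2S.trans (h2S'.trans h2S''))
    exact hgoal
  -- the dominant energy condition squared
  have hμ0 : 0 ≤ μ := le_trans (Real.sqrt_nonneg _) hdec
  have hJ2 : (∑ j ∈ Finset.Icc 1 n, (J j) ^ 2) ≤ μ ^ 2 := by
    have hs : 0 ≤ ∑ j ∈ Finset.Icc 1 n, (J j) ^ 2 :=
      Finset.sum_nonneg fun j _ => sq_nonneg _
    have := Real.sqrt_le_sqrt (le_of_eq (Real.sq_sqrt hs).symm)
    calc (∑ j ∈ Finset.Icc 1 n, (J j) ^ 2)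
        = Real.sqrt (∑ j ∈ Finset.Icc 1 n, (J j) ^ 2) ^ 2 := (Real.sq_sqrt hs).symm
      _ ≤ μ ^ 2 := by
          apply pow_le_pow_left₀ (Real.sqrt_nonneg _) hdec
  -- T φ = 0
  have hTφ0 : T φ = 0 := by
    have hφK : (inner ℂ φ (K φ) : ℂ) = (μ : ℂ) * (‖φ‖ : ℂ) ^ 2 := by
      rw [← inner_conj_symm, hKφφ, map_mul, Complex.conj_ofReal, map_pow,
        Complex.conj_ofReal]
    have hnorm : (inner ℂ (T φ) (T φ) : ℂ)
        = (((∑ j ∈ Finset.Icc 1 n, (J j) ^ 2 : ℝ) : ℂ) - (μ : ℂ) ^ 2) * (‖φ‖ : ℂ) ^ 2 := by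
      rw [hTφ, inner_sub_left, inner_sub_right, inner_sub_right,
        inner_smul_left, inner_smul_right, inner_smul_left, inner_smul_right,
        hself, hKφφ, hφK, hKK, Complex.conj_ofReal]
      push_cast
      ring
    have hre := congrArg Complex.re hnorm
    have hre0 : (inner ℂ (T φ) (T φ) : ℂ).re = ‖T φ‖ ^ 2 := by
      rw [← RCLike.re_to_complex]
      exact inner_self_eq_norm_sq (T φ)
    rw [hre0] at hre
    have hrhs : ((((∑ j ∈ Finset.Icc 1 n, (J j) ^ 2 : ℝ) : ℂ) - (μ : ℂ) ^ 2)
        * (‖φ‖ : ℂ) ^ 2).re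
        = ((∑ j ∈ Finset.Icc 1 n, (J j) ^ 2) - μ ^ 2) * ‖φ‖ ^ 2 := by
      rw [show ((((∑ j ∈ Finset.Icc 1 n, (J j) ^ 2 : ℝ) : ℂ) - (μ : ℂ) ^ 2)
        * (‖φ‖ : ℂ) ^ 2)
        = ((((∑ j ∈ Finset.Icc 1 n, (J j) ^ 2) - μ ^ 2) * ‖φ‖ ^ 2 : ℝ) : ℂ) by
          push_cast; ring, Complex.ofReal_re]
    rw [hrhs] at hre
    have hle : ((∑ j ∈ Finset.Icc 1 n, (J j) ^ 2) - μ ^ 2) * ‖φ‖ ^ 2 ≤ 0 :=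
      mul_nonpos_of_nonpos_of_nonneg (by linarith) (sq_nonneg _)
    have : ‖T φ‖ ^ 2 ≤ 0 := by rw [hre]; exact hle
    have hTn : ‖T φ‖ = 0 := by nlinarith [norm_nonneg (T φ), sq_nonneg ‖T φ‖]
    exact norm_eq_zero.mp hTn
  refine ⟨him, hTφ0, ?_, ?_⟩
  · -- μ‖φ‖² + Σ Jⱼ Xⱼ = 0
    have h := hKφφ
    rw [hKsum] at h
    have h' : ∑ j ∈ Finset.Icc 1 n, (J j : ℂ) * inner ℂ ((γ 0 ∘ₗ γ j) φ) φ
        = -((μ : ℂ) * (‖φ‖ : ℂ) ^ 2) := by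
      rw [← h, ← Finset.sum_neg_distrib]
      refine Finset.sum_congr rfl fun j hj => ?_
      simp only [Finset.mem_Icc] at hj
      rw [LinearMap.comp_apply, hflip j hj.1 hj.2]
      ring
    rw [show -((μ : ℂ) * (‖φ‖ : ℂ) ^ 2) = ((-(μ * ‖φ‖ ^ 2) : ℝ) : ℂ) by
      push_cast; ring] at h'
    have hre := congrArg Complex.re h'
    simp only [Complex.re_sum, Complex.mul_re, Complex.ofReal_re,
      Complex.ofReal_im, zero_mul, sub_zero] at hre
    linarith [hre]
  · -- μ Xₖ + ‖φ‖² Jₖ = 0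
    intro k hk1 hk2
    have hμφ : (μ : ℂ) • φ = K φ := by
      have := hTφ0
      rw [hTφ, sub_eq_zero] at this
      exact this
    have h1 : (μ : ℂ) * inner ℂ (γ 0 (γ k φ)) φ
        = inner ℂ (γ 0 (γ k φ)) (K φ) := by
      rw [← hμφ, inner_smul_right]
    have h2 : (inner ℂ (γ 0 (γ k φ)) (K φ) : ℂ)
        = ∑ j ∈ Finset.Icc 1 n, (J j : ℂ) * inner ℂ (γ j (γ k φ)) φ := by
      rw [hKapp, inner_sum]
      refine Finset.sum_congr rfl fun j hj => ?_
      simp only [Finset.mem_Icc] at hj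
      rw [inner_smul_right, ← sa j hj.1 hj.2, h0pt]
    have h3 := h1.trans h2
    have hre := congrArg Complex.re h3
    simp only [Complex.re_sum, Complex.mul_re, Complex.ofReal_re,
      Complex.ofReal_im, zero_mul, sub_zero] at hre
    have hrhs : ∑ j ∈ Finset.Icc 1 n, J j * ((inner ℂ (γ j (γ k φ)) φ : ℂ)).re
        = J k * (-(‖φ‖ ^ 2)) := by
      rw [Finset.sum_eq_single_of_mem k (Finset.mem_Icc.mpr ⟨hk1, hk2⟩)]
      · rw [hsqpt k hk1 hk2 φ, inner_neg_left, Complex.neg_re]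
        have hself : ((inner ℂ φ φ : ℂ)).re = ‖φ‖ ^ 2 := by
          rw [← RCLike.re_to_complex]
          exact inner_self_eq_norm_sq φ
        rw [hself]
      · intro j hj hjk
        simp only [Finset.mem_Icc] at hj
        rw [rskew j k hj.1 hj.2 hk1 hk2 hjk, mul_zero]
    rw [hrhs] at hre
    simp only [LinearMap.comp_apply]
    linarith [hre]
end
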